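/- arXiv:math/0403377 — 3 statements merged into one kernel-verified Lean document; each statement's English description precedes it below -/
import Mathlib

section
/- Let h : ℝ × ℝ × ℝ → ℝ be smooth, and write ∂_S h for the partial derivative in the third variable. Let Ω ⊆ ℝ² be open and u : Ω → ℂⁿ a smooth map satisfying the Floer-type equation ∂_s u + i ∂_t u = 2 ∂_S h(s,t,|u|²) · u on Ω. Set f(s,t) = |u(s,t)|². Then for all (s,t) ∈ Ω: Δf(s,t) = 4|∂_s u(s,t)|² + 4 f(s,t) · ∂_s ∂_S h(s,t,f(s,t)) + 4 f(s,t) · ∂_S ∂_S h(s,t,f(s,t)) · ∂_s f(s,t). -/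
open scoped ContDiff
noncomputable section

/-- `ℂⁿ` as a Euclidean space. -/
abbrev Cn (n : ℕ) := EuclideanSpace ℂ (Fin n)

/-- The Euclidean plane `ℝ²` with coordinates `(s, t)`. -/
abbrev E2 := EuclideanSpace ℝ (Fin 2)

/-- The coordinate direction `∂/∂s` in `ℝ²`. -/
def es : E2 := EuclideanSpace.single 0 (1 : ℝ)

/-- The coordinate direction `∂/∂t` in `ℝ²`. -/
def et : E2 := EuclideanSpace.single 1 (1 : ℝ)

/-- The partial derivative `∂_s v`. -/
def pds {F : Type*} [NormedAddCommGroup F] [NormedSpace ℝ F] (v : E2 → F) (x : E2) : F :=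
  fderiv ℝ v x es

/-- The partial derivative `∂_t v`. -/
def pdt {F : Type*} [NormedAddCommGroup F] [NormedSpace ℝ F] (v : E2 → F) (x : E2) : F :=
  fderiv ℝ v x et

/-- The Euclidean Laplacian `Δg = ∂²g/∂s² + ∂²g/∂t²` on `ℝ²`. -/
def lap2 (g : E2 → ℝ) (x : E2) : ℝ :=
  fderiv ℝ (fderiv ℝ g) x es es + fderiv ℝ (fderiv ℝ g) x et et

/-- `∂_S h`: the partial derivative of `h(s,t,S)` in the third variable. -/
def pdS (h : ℝ × ℝ × ℝ → ℝ) (s t S : ℝ) : ℝ :=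
  deriv (fun S' => h (s, t, S')) S

/-- `∂_s ∂_S h`: mixed partial derivative. -/
def pdspdS (h : ℝ × ℝ × ℝ → ℝ) (s t S : ℝ) : ℝ :=
  deriv (fun s' => pdS h s' t S) s

/-- `∂_S ∂_S h`: second partial derivative in the third variable. -/
def pdSpdS (h : ℝ × ℝ × ℝ → ℝ) (s t S : ℝ) : ℝ :=
  deriv (fun S' => pdS h s t S') S

section helpers

variable {h : ℝ × ℝ × ℝ → ℝ}

theorem pdS_eq (hh : ContDiff ℝ ∞ h) (s t S : ℝ) :
    pdS h s t S = fderiv ℝ h (s, t, S) (0, 0, 1) := by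
  have hL : HasDerivAt (fun S' : ℝ => ((s, t, S') : ℝ × ℝ × ℝ)) (0, 0, 1) S :=
    (hasDerivAt_const S s).prodMk ((hasDerivAt_const S t).prodMk (hasDerivAt_id S))
  have := ((hh.differentiable (by simp)) (s, t, S)).hasFDerivAt.comp_hasDerivAt S hL
  exact this.deriv

theorem k_contDiff (hh : ContDiff ℝ ∞ h) :
    ContDiff ℝ ∞ (fun p : ℝ × ℝ × ℝ => fderiv ℝ h p (0, 0, 1)) :=
  (ContinuousLinearMap.apply ℝ ℝ ((0,0,1) : ℝ × ℝ × ℝ)).contDiff.comp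
    (hh.fderiv_right (by simp))

theorem pdspdS_eq (hh : ContDiff ℝ ∞ h) (s t S : ℝ) :
    pdspdS h s t S
      = fderiv ℝ (fun p : ℝ × ℝ × ℝ => fderiv ℝ h p (0, 0, 1)) (s, t, S) (1, 0, 0) := by
  have hL : HasDerivAt (fun s' : ℝ => ((s', t, S) : ℝ × ℝ × ℝ)) (1, 0, 0) s :=
    (hasDerivAt_id s).prodMk ((hasDerivAt_const s t).prodMk (hasDerivAt_const s S))
  have hk := ((k_contDiff hh).differentiable (by simp)) (s, t, S)
  have hc := hk.hasFDerivAt.comp_hasDerivAt s hL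
  have heq : (fun s' => pdS h s' t S) = fun s' => fderiv ℝ h (s', t, S) (0, 0, 1) := by
    funext s'; exact pdS_eq hh s' t S
  rw [pdspdS, heq]; exact hc.deriv

theorem pdSpdS_eq (hh : ContDiff ℝ ∞ h) (s t S : ℝ) :
    pdSpdS h s t S
      = fderiv ℝ (fun p : ℝ × ℝ × ℝ => fderiv ℝ h p (0, 0, 1)) (s, t, S) (0, 0, 1) := by
  have hL : HasDerivAt (fun S' : ℝ => ((s, t, S') : ℝ × ℝ × ℝ)) (0, 0, 1) S :=
    (hasDerivAt_const S s).prodMk ((hasDerivAt_const S t).prodMk (hasDerivAt_id S))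
  have hk := ((k_contDiff hh).differentiable (by simp)) (s, t, S)
  have hc := hk.hasFDerivAt.comp_hasDerivAt S hL
  have heq : (fun S' => pdS h s t S') = fun S' => fderiv ℝ h (s, t, S') (0, 0, 1) := by
    funext S'; exact pdS_eq hh s t S'
  rw [pdSpdS, heq]; exact hc.deriv

end helpers


theorem re_inner_smul_real {n : ℕ} (x y : Cn n) (r : ℝ) :
    RCLike.re (inner ℂ x (r • y) : ℂ) = r * RCLike.re (inner ℂ x y : ℂ) := by
  rw [RCLike.real_smul_eq_coe_smul (K := ℂ), inner_smul_real_right, RCLike.smul_re]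

theorem re_inner_smul_real_left {n : ℕ} (x y : Cn n) (r : ℝ) :
    RCLike.re (inner ℂ (r • x) y : ℂ) = r * RCLike.re (inner ℂ x y : ℂ) := by
  rw [RCLike.real_smul_eq_coe_smul (K := ℂ), inner_smul_real_left, RCLike.smul_re]

theorem im_inner_smul_real {n : ℕ} (x y : Cn n) (r : ℝ) :
    RCLike.im (inner ℂ x (r • y) : ℂ) = r * RCLike.im (inner ℂ x y : ℂ) := by
  rw [RCLike.real_smul_eq_coe_smul (K := ℂ), inner_smul_real_right, RCLike.smul_im]

set_option maxHeartbeats 2000000 in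
/-- For a smooth solution `u` of the Floer-type equation
`∂_s u + i ∂_t u = 2 ∂_S h(s,t,|u|²) · u` on an open set `Ω ⊆ ℝ²`, the function
`f = |u|²` satisfies
`Δf = 4|∂_s u|² + 4 f ∂_s∂_S h(s,t,f) + 4 f ∂_S∂_S h(s,t,f) ∂_s f`. -/
theorem floer_radial_laplacian_identity {n : ℕ}
    (h : ℝ × ℝ × ℝ → ℝ) (hh : ContDiff ℝ ∞ h)
    (Ω : Set E2) (hΩ : IsOpen Ω) (u : E2 → Cn n) (hu : ContDiffOn ℝ ∞ u Ω)
    (hfloer : ∀ x ∈ Ω,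
      pds u x + Complex.I • pdt u x = (2 * pdS h (x 0) (x 1) (‖u x‖ ^ 2)) • u x) :
    ∀ x ∈ Ω,
      lap2 (fun y => ‖u y‖ ^ 2) x =
        4 * ‖pds u x‖ ^ 2
          + 4 * ‖u x‖ ^ 2 * pdspdS h (x 0) (x 1) (‖u x‖ ^ 2)
          + 4 * ‖u x‖ ^ 2 * pdSpdS h (x 0) (x 1) (‖u x‖ ^ 2)
              * pds (fun y => ‖u y‖ ^ 2) x := by
  intro x hx
  have hnx : Ω ∈ nhds x := hΩ.mem_nhds hx
  -- notation
  set k : ℝ × ℝ × ℝ → ℝ := fun p => fderiv ℝ h p (0, 0, 1) with hk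
  set F : E2 → ℝ := fun y => RCLike.re (inner ℂ (u y) (u y) : ℂ) with hFdef
  have hFfun : (fun y => ‖u y‖ ^ 2 : E2 → ℝ) = F := by
    funext y; exact (inner_self_eq_norm_sq (𝕜 := ℂ) (u y)).symm
  set u' : E2 → (E2 →L[ℝ] Cn n) := fderiv ℝ u with hu'def
  set G : E2 → ℝ := fun y => 2 * k (y 0, y 1, F y) with hGdef
  -- differentiability of u on Ω
  have hud : ∀ y ∈ Ω, HasFDerivAt u (u' y) y := fun y hy =>
    ((hu.contDiffAt (hΩ.mem_nhds hy)).differentiableAt (by simp)).hasFDerivAt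
  have hcu : ContDiffAt ℝ ∞ u x := hu.contDiffAt hnx
  -- derivative of F on Ω
  have hFd : ∀ y ∈ Ω, HasFDerivAt F
      ((RCLike.reCLM (K := ℂ)).comp
        ((fderivInnerCLM ℂ (u y, u y)).comp ((u' y).prod (u' y)))) y := fun y hy =>
    (RCLike.reCLM (K := ℂ)).hasFDerivAt.comp y ((hud y hy).inner ℂ (hud y hy))
  have hFds : ∀ y ∈ Ω, ∀ v : E2,
      fderiv ℝ F y v = 2 * RCLike.re (inner ℂ (u y) (u' y v) : ℂ) := by
    intro y hy v
    rw [(hFd y hy).fderiv]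
    simp only [ContinuousLinearMap.comp_apply, ContinuousLinearMap.prod_apply,
      fderivInnerCLM_apply, RCLike.reCLM_apply, map_add]
    rw [← inner_conj_symm (u y) (u' y v)]
    simp; have := inner_re_symm (𝕜 := ℂ) (u' y v) (u y); simp at this; linarith
  -- second derivative data for u at x
  have hcu' : ContDiffAt ℝ ∞ u' x := hcu.fderiv_right (by simp)
  set u'' : E2 →L[ℝ] (E2 →L[ℝ] Cn n) := fderiv ℝ u' x with hu''def
  have hu'd : HasFDerivAt u' u'' x := (hcu'.differentiableAt (by simp)).hasFDerivAt
  have hus : ∀ v : E2, HasFDerivAt (fun y => u' y v)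
      ((ContinuousLinearMap.apply ℝ (Cn n) v).comp u'') x :=
    fun v => (ContinuousLinearMap.apply ℝ (Cn n) v).hasFDerivAt.comp x hu'd
  -- symmetry of second derivative
  have hsymm : u'' es et = u'' et es := by
    exact second_derivative_symmetric_of_eventually
      (Filter.eventually_of_mem hnx hud) hu'd es et
  -- smoothness & derivative of F at x, twice
  have hcF : ContDiffAt ℝ ∞ F x :=
    (RCLike.reCLM (K := ℂ)).contDiff.comp_contDiffAt x (hcu.inner ℂ hcu)
  have hcF' : ContDiffAt ℝ ∞ (fderiv ℝ F) x := hcF.fderiv_right (by simp)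
  set F'' : E2 →L[ℝ] (E2 →L[ℝ] ℝ) := fderiv ℝ (fderiv ℝ F) x with hF''def
  have hF'd : HasFDerivAt (fderiv ℝ F) F'' x := (hcF'.differentiableAt (by simp)).hasFDerivAt
  -- second derivatives of F in directions v,v
  have hsecond : ∀ v : E2, F'' v v =
      2 * RCLike.re (inner ℂ (u x) (u'' v v) : ℂ)
        + 2 * RCLike.re (inner ℂ (u' x v) (u' x v) : ℂ) := by
    intro v
    have h1 : HasFDerivAt (fun y => fderiv ℝ F y v)
        ((ContinuousLinearMap.apply ℝ ℝ v).comp F'') x :=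
      (ContinuousLinearMap.apply ℝ ℝ v).hasFDerivAt.comp x hF'd
    have heq : (fun y => 2 * RCLike.re (inner ℂ (u y) (u' y v) : ℂ))
        =ᶠ[nhds x] (fun y => fderiv ℝ F y v) :=
      Filter.eventuallyEq_of_mem hnx (fun y hy => (hFds y hy v).symm)
    have h2 : HasFDerivAt (fun y => 2 * RCLike.re (inner ℂ (u y) (u' y v) : ℂ))
        ((ContinuousLinearMap.apply ℝ ℝ v).comp F'') x :=
      h1.congr_of_eventuallyEq heq
    have h3 : HasFDerivAt (fun y => 2 * RCLike.re (inner ℂ (u y) (u' y v) : ℂ))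
        ((2:ℝ) • ((RCLike.reCLM (K := ℂ)).comp
          ((fderivInnerCLM ℂ (u x, u' x v)).comp
            ((u' x).prod ((ContinuousLinearMap.apply ℝ (Cn n) v).comp u''))))) x := by
      exact (((RCLike.reCLM (K := ℂ)).hasFDerivAt.comp x
        ((hud x hx).inner ℂ (hus v))).const_mul 2)
    have h4 := h2.unique h3
    have h5 := congrArg (fun L : E2 →L[ℝ] ℝ => L v) h4
    simp only [ContinuousLinearMap.comp_apply, ContinuousLinearMap.apply_apply,
      ContinuousLinearMap.smul_apply, ContinuousLinearMap.prod_apply,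
      fderivInnerCLM_apply, RCLike.reCLM_apply, map_add, smul_eq_mul] at h5
    rw [h5]; ring
  -- pdS rewriting in floer
  have hfloer' : ∀ y ∈ Ω, u' y es + Complex.I • u' y et = G y • u y := by
    intro y hy
    have := hfloer y hy
    rw [pdS_eq hh, show ‖u y‖ ^ 2 = F y from congrFun hFfun y] at this
    simpa [pds, pdt, hGdef, hk, ← hu'def] using this
  -- derivative of G at x
  set DF : E2 →L[ℝ] ℝ := fderiv ℝ F x with hDFdef
  have hFdx : HasFDerivAt F DF x := (hcF.differentiableAt (by simp)).hasFDerivAt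
  have hproj : ∀ i : Fin 2, HasFDerivAt (fun y : E2 => y i)
      (EuclideanSpace.proj i : E2 →L[ℝ] ℝ) x :=
    fun i => (EuclideanSpace.proj i : E2 →L[ℝ] ℝ).hasFDerivAt
  set Dk : ℝ × ℝ × ℝ →L[ℝ] ℝ := fderiv ℝ k (x 0, x 1, F x) with hDkdef
  have hkd : HasFDerivAt k Dk (x 0, x 1, F x) :=
    (((k_contDiff hh).differentiable (by simp)) _).hasFDerivAt
  set DG : E2 →L[ℝ] ℝ :=
    (2:ℝ) • (Dk.comp (((EuclideanSpace.proj 0 : E2 →L[ℝ] ℝ)).prod (((EuclideanSpace.proj 1 : E2 →L[ℝ] ℝ)).prod DF))) with hDGdef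
  have hGd : HasFDerivAt G DG x := by
    have hP : HasFDerivAt (fun y : E2 => ((y 0 : ℝ), (y 1 : ℝ), F y))
        (((EuclideanSpace.proj 0 : E2 →L[ℝ] ℝ)).prod (((EuclideanSpace.proj 1 : E2 →L[ℝ] ℝ)).prod DF)) x :=
      (hproj 0).prodMk ((hproj 1).prodMk hFdx)
    exact (hkd.comp x hP).const_mul 2
  -- coordinates of es, et
  have hes0 : (es : E2) 0 = 1 := by simp [es]
  have hes1 : (es : E2) 1 = 0 := by simp [es]
  have het0 : (et : E2) 0 = 0 := by simp [et]
  have het1 : (et : E2) 1 = 1 := by simp [et]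
  -- value of DG at es
  have hDGes : DG es = 2 * (pdspdS h (x 0) (x 1) (F x) + DF es * pdSpdS h (x 0) (x 1) (F x)) := by
    have h1 : DG es = 2 * Dk (1, 0, DF es) := by
      simp [hDGdef, hes0, hes1]
    have h2 : ((1:ℝ), (0:ℝ), DF es) = ((1,0,0) : ℝ × ℝ × ℝ) + DF es • ((0,0,1) : ℝ × ℝ × ℝ) := by
      simp
    rw [h1, h2, map_add, map_smul, pdspdS_eq hh, pdSpdS_eq hh]
    simp [hDkdef, hk]
  -- differentiate the Floer equation at x
  have heqΦΨ : (fun y => u' y es + Complex.I • u' y et) =ᶠ[nhds x] (fun y => G y • u y) :=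
    Filter.eventuallyEq_of_mem hnx (fun y hy => hfloer' y hy)
  have hΨ : HasFDerivAt (fun y => G y • u y) (G x • u' x + DG.smulRight (u x)) x :=
    hGd.smul (hud x hx)
  have hΦ : HasFDerivAt (fun y => u' y es + Complex.I • u' y et)
      (((ContinuousLinearMap.apply ℝ (Cn n) es).comp u'')
        + Complex.I • ((ContinuousLinearMap.apply ℝ (Cn n) et).comp u'')) x :=
    (hus es).add ((hus et).const_smul Complex.I)
  have hDeq := hΦ.unique (hΨ.congr_of_eventuallyEq heqΦΨ)
  have eqs : u'' es es + Complex.I • u'' es et = G x • u' x es + DG es • u x := by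
    have := congrArg (fun L : E2 →L[ℝ] Cn n => L es) hDeq
    simpa using this
  have eqt : u'' et es + Complex.I • u'' et et = G x • u' x et + DG et • u x := by
    have := congrArg (fun L : E2 →L[ℝ] Cn n => L et) hDeq
    simpa using this
  have h2s := hsecond es
  have h2t := hsecond et
  have hflx0 := hfloer' x hx
  -- abbreviations
  set w : Cn n := u x with hwdef
  set a : Cn n := u' x es with hadef
  set b : Cn n := u' x et with hbdef
  set A : Cn n := u'' es es with hAdef
  set C : Cn n := u'' es et with hCdef
  set C2 : Cn n := u'' et es with hC2def
  set Dt : Cn n := u'' et et with hDtdef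
  set g0 : ℝ := G x with hg0def
  set gsv : ℝ := DG es with hgsvdef
  set gtv : ℝ := DG et with hgtvdef
  set r : ℝ := RCLike.re (inner ℂ w a : ℂ) with hr
  set W : ℝ := RCLike.re (inner ℂ w w : ℂ) with hW
  set al : ℝ := RCLike.re (inner ℂ a a : ℂ) with hal
  have hIb : Complex.I • b = g0 • w - a := eq_sub_of_add_eq' hflx0
  have i1 : RCLike.im (inner ℂ w b : ℂ) = r - g0 * W := by
    have h0 := congrArg (fun v : Cn n => RCLike.re (inner ℂ w v : ℂ)) hIb
    simp only [inner_smul_right, inner_sub_right, re_inner_smul_real, map_sub,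
      ← RCLike.I_to_complex, RCLike.I_mul_re] at h0
    rw [← hW, ← hr] at h0
    linarith
  have hA2 : A = (g0 • a + gsv • w) - Complex.I • C := eq_sub_of_add_eq eqs
  have s1 : RCLike.re (inner ℂ w A : ℂ)
      = g0 * r + gsv * W + RCLike.im (inner ℂ w C2 : ℂ) := by
    rw [hA2, hsymm]
    simp only [inner_sub_right, inner_add_right, re_inner_smul_real, inner_smul_right,
      map_sub, map_add, ← RCLike.I_to_complex, RCLike.I_mul_re, ← hr, ← hW]
    ring
  have hDt2 : Dt = (-Complex.I) • ((g0 • b + gtv • w) - C2) := by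
    have h6 : Complex.I • Dt = (g0 • b + gtv • w) - C2 := eq_sub_of_add_eq' eqt
    rw [← h6, smul_smul]
    simp
  have s2 : RCLike.re (inner ℂ w Dt : ℂ)
      = g0 * (r - g0 * W) - RCLike.im (inner ℂ w C2 : ℂ) := by
    rw [hDt2, ← i1]
    simp only [inner_smul_right, inner_sub_right, inner_add_right, im_inner_smul_real,
      neg_mul, map_neg, map_sub, map_add,
      ← RCLike.I_to_complex, RCLike.I_mul_re, inner_self_im, neg_neg, ← hr]
    ring
  have s3 : RCLike.re (inner ℂ b b : ℂ) = g0 * g0 * W - 2 * g0 * r + al := by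
    have hb : b = (-Complex.I) • (g0 • w - a) := by
      rw [← hIb, smul_smul]
      simp
    have hnb : ‖b‖ = ‖g0 • w - a‖ := by
      rw [hb, norm_smul]
      simp
    rw [inner_self_eq_norm_sq, hnb, ← inner_self_eq_norm_sq (𝕜 := ℂ)]
    simp only [inner_sub_right, inner_sub_left, map_sub, map_add,
      re_inner_smul_real, re_inner_smul_real_left, ← hal]
    rw [inner_re_symm a w, ← hr, ← hW]
    ring
  have key : F'' es es + F'' et et = 4 * al + 2 * gsv * W := by
    rw [h2s, h2t, s1, s2, s3]
    ring
  -- final assembly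
  have egoal1 : lap2 (fun y => ‖u y‖ ^ 2) x = F'' es es + F'' et et := by
    rw [hFfun]; rfl
  have egoal2 : ‖pds u x‖ ^ 2 = al := by
    rw [hal, inner_self_eq_norm_sq]; rfl
  have egoal3 : ‖u x‖ ^ 2 = W := by
    rw [hW, inner_self_eq_norm_sq]
  have egoal4 : pds (fun y => ‖u y‖ ^ 2) x = DF es := by
    rw [hFfun]; rfl
  have egoal5 : ‖u x‖ ^ 2 = F x := congrFun hFfun x
  rw [egoal1, egoal2, key]
  rw [show (‖u x‖ ^ 2 : ℝ) = F x from egoal5] at egoal3 ⊢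
  rw [egoal4, egoal3, hDGes]
  ring
end
end

section
/- Let H : ℝ × ℂⁿ → ℝ be smooth and 1-periodic in the first variable t. Let u : (−ε, ε) × ℝ → ℂⁿ be smooth with u(r, t+1) = u(r,t) for all (r,t). Then for every r ∈ (−ε,ε): d/dr [A_H(u(r,·))] = −∫₀¹ ω₀( ∂_r u(r,t), ∂_t u(r,t) − X_H(t, u(r,t)) ) dt. In particular, the critical points of the action functional A_H on smooth loops are exactly the 1-periodic solutions of γ'(t) = X_H(t, γ(t)). -/
open scoped ContDiff
noncomputable section

/-- The standard symplectic form `ω₀(u,v) = Im ⟪u,v⟫` on `ℂⁿ`, where the Hermitian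
inner product is conjugate-linear in the first variable. -/
def omega0 {n : ℕ} (u v : Cn n) : ℝ := (inner ℂ u v : ℂ).im

/-- The standard Liouville form `λ₀(z)(v) = ½ ω₀(z, v)` on `ℂⁿ`. -/
def lambda0 {n : ℕ} (z v : Cn n) : ℝ := (1 / 2) * omega0 z v

/-- The Hamiltonian action functional
`A_H(γ) = -∫₀¹ λ₀(γ(t))(γ'(t)) dt - ∫₀¹ H(t, γ(t)) dt`. -/
def actionAH {n : ℕ} (H : ℝ → Cn n → ℝ) (γ : ℝ → Cn n) : ℝ :=
  (-∫ t in (0:ℝ)..1, lambda0 (γ t) (deriv γ t)) - ∫ t in (0:ℝ)..1, H t (γ t)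

lemma myclm_apply {E F α : Type*} [TopologicalSpace α] [NormedAddCommGroup E] [NormedSpace ℝ E]
    [NormedAddCommGroup F] [NormedSpace ℝ F] {f : α → E →L[ℝ] F} {g : α → E} {x : α}
    (hf : ContinuousAt f x) (hg : ContinuousAt g x) : ContinuousAt (fun y => f y (g y)) x :=
  (isBoundedBilinearMap_apply.continuous.continuousAt).comp (hf.prodMk hg)

lemma omega0_eq {n : ℕ} (x y : Cn n) :
    omega0 x y = (inner ℝ (Complex.I • x) y : ℝ) := by
  simp only [omega0, PiLp.inner_apply, RCLike.inner_apply, PiLp.smul_apply, smul_eq_mul,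
    Complex.inner, Complex.im_sum]
  refine Finset.sum_congr rfl fun i _ => ?_
  simp [Complex.ext_iff]
  ring

lemma continuousAt_omega0 {n : ℕ} {α : Type*} [TopologicalSpace α] {f g : α → Cn n} {x : α}
    (hf : ContinuousAt f x) (hg : ContinuousAt g x) :
    ContinuousAt (fun a => omega0 (f a) (g a)) x := by
  simp only [omega0_eq]
  exact ContinuousAt.inner (𝕜 := ℝ) (hf.const_smul Complex.I) hg

lemma omega0_antisymm {n : ℕ} (x y : Cn n) : omega0 x y = -omega0 y x := by
  rw [omega0, omega0, ← inner_conj_symm x y]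
  simp [← Finset.sum_neg_distrib]
  rw [← inner_conj_symm x y, Complex.conj_im]

lemma omega0_sub_right {n : ℕ} (x a b : Cn n) :
    omega0 x (a - b) = omega0 x a - omega0 x b := by
  simp [omega0, inner_sub_right]

lemma omega0_zero_right {n : ℕ} (x : Cn n) : omega0 x 0 = 0 := by
  simp [omega0]

lemma omega0_I_smul_self {n : ℕ} (x : Cn n) :
    omega0 (Complex.I • x) x = -‖x‖ ^ 2 := by
  rw [omega0, inner_smul_left]
  have h : RCLike.re (inner ℂ x x : ℂ) = ‖x‖ ^ 2 := (norm_sq_eq_re_inner (𝕜 := ℂ) x).symm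
  rw [RCLike.re_to_complex] at h
  simp only [Complex.conj_I, RCLike.star_def, Complex.mul_im, Complex.neg_im, Complex.neg_re,
    Complex.I_re, Complex.I_im]
  rw [h]; ring

lemma ext_omega0 {n : ℕ} (x y : Cn n) (h : ∀ v, omega0 x v = omega0 y v) : x = y := by
  have h2 : ∀ v, (inner ℝ (Complex.I • x) v : ℝ) = inner ℝ (Complex.I • y) v := by
    intro v; rw [← omega0_eq, ← omega0_eq]; exact h v
  have h3 : Complex.I • x = Complex.I • y := ext_inner_right ℝ h2
  calc x = (-Complex.I) • (Complex.I • x) := by rw [smul_smul]; simp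
    _ = (-Complex.I) • (Complex.I • y) := by rw [h3]
    _ = y := by rw [smul_smul]; simp

lemma HasDerivAt.omega0' {n : ℕ} {f g : ℝ → Cn n} {f' g' : Cn n} {x : ℝ}
    (hf : HasDerivAt f f' x) (hg : HasDerivAt g g' x) :
    HasDerivAt (fun t => omega0 (f t) (g t)) (omega0 (f x) g' + omega0 f' (g x)) x := by
  have h2 := HasDerivAt.inner ℝ (hf.const_smul Complex.I) hg
  simpa [omega0_eq] using h2

lemma xh_eq {n : ℕ} (H : ℝ → Cn n → ℝ) (XH : ℝ → Cn n → Cn n)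
    (hXH : ∀ (t : ℝ) (z v : Cn n), omega0 (XH t z) v = fderiv ℝ (H t) z v)
    (t : ℝ) (z : Cn n) :
    XH t z = (-Complex.I) •
      ((InnerProductSpace.toDual ℝ (Cn n)).symm (fderiv ℝ (H t) z)) := by
  set G := (InnerProductSpace.toDual ℝ (Cn n)).symm (fderiv ℝ (H t) z) with hG
  have h1 : Complex.I • XH t z = G := by
    refine ext_inner_right ℝ fun v => ?_
    rw [← omega0_eq, hXH, hG, InnerProductSpace.toDual_symm_apply]
  rw [← h1, smul_smul]
  norm_num

lemma xh_smooth {n : ℕ} (H : ℝ → Cn n → ℝ)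
    (hH : ContDiff ℝ ∞ (fun p : ℝ × Cn n => H p.1 p.2))
    (XH : ℝ → Cn n → Cn n)
    (hXH : ∀ (t : ℝ) (z v : Cn n), omega0 (XH t z) v = fderiv ℝ (H t) z v) :
    ContDiff ℝ ∞ (fun p : ℝ × Cn n => XH p.1 p.2) := by
  have hG : ContDiff ℝ ∞ (fun p : ℝ × Cn n => fderiv ℝ (H p.1) p.2) := by
    refine ContDiff.fderiv (f := fun (p : ℝ × Cn n) (z : Cn n) => H p.1 z) (g := Prod.snd)
      ?_ contDiff_snd (le_of_eq rfl)
    exact hH.comp ((contDiff_fst.fst).prodMk contDiff_snd)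
  have heq : (fun p : ℝ × Cn n => XH p.1 p.2) = fun p => (-Complex.I) •
      ((InnerProductSpace.toDual ℝ (Cn n)).symm (fderiv ℝ (H p.1) p.2)) :=
    funext fun p => xh_eq H XH hXH p.1 p.2
  rw [heq]
  exact (((InnerProductSpace.toDual ℝ (Cn n)).symm.contDiff).comp hG).const_smul _

lemma xh_per {n : ℕ} (H : ℝ → Cn n → ℝ)
    (hHper : ∀ (t : ℝ) (z : Cn n), H (t + 1) z = H t z)
    (XH : ℝ → Cn n → Cn n)
    (hXH : ∀ (t : ℝ) (z v : Cn n), omega0 (XH t z) v = fderiv ℝ (H t) z v)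
    (t : ℝ) (z : Cn n) : XH (t + 1) z = XH t z := by
  rw [xh_eq H XH hXH, xh_eq H XH hXH]
  have : H (t + 1) = H t := funext fun z => hHper t z
  rw [this]

set_option maxHeartbeats 2000000 in
open Set Metric MeasureTheory intervalIntegral in
lemma key {n : ℕ} (H : ℝ → Cn n → ℝ) (hH : ContDiff ℝ ∞ (fun p : ℝ × Cn n => H p.1 p.2))
    (XH : ℝ → Cn n → Cn n)
    (hXH : ∀ (t : ℝ) (z v : Cn n), omega0 (XH t z) v = fderiv ℝ (H t) z v)
    (ε : ℝ) (hε : 0 < ε) (u : ℝ × ℝ → Cn n)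
    (hu : ContDiffOn ℝ ∞ u (Set.Ioo (-ε) ε ×ˢ Set.univ))
    (huper : ∀ r t : ℝ, u (r, t + 1) = u (r, t)) :
    ∀ r ∈ Set.Ioo (-ε) ε,
      deriv (fun r' => actionAH H (fun t => u (r', t))) r =
        -∫ t in (0:ℝ)..1,
            omega0 (deriv (fun r' => u (r', t)) r)
              (deriv (fun t' => u (r, t')) t - XH t (u (r, t))) := by
  have h1le : (1 : WithTop ℕ∞) ≤ ∞ := by
    rw [show ((1 : WithTop ℕ∞)) = ((1:ℕ∞) : WithTop ℕ∞) from rfl]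
    exact WithTop.coe_le_coe.mpr le_top
  have h2le : (2 : WithTop ℕ∞) ≤ ∞ := by
    rw [show ((2 : WithTop ℕ∞)) = ((2:ℕ∞) : WithTop ℕ∞) from rfl]
    exact WithTop.coe_le_coe.mpr le_top
  have hplus : ∞ + 1 ≤ (∞ : WithTop ℕ∞) := le_of_eq rfl
  intro r₀ hr₀
  set Ω : Set (ℝ × ℝ) := Set.Ioo (-ε) ε ×ˢ Set.univ with hΩdef
  have hΩ : IsOpen Ω := isOpen_Ioo.prod isOpen_univ
  have hmem : ∀ {a b : ℝ}, a ∈ Set.Ioo (-ε) ε → (a, b) ∈ Ω := fun ha => ⟨ha, trivial⟩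
  have hCAt : ∀ p ∈ Ω, ContDiffAt ℝ ∞ u p := fun p hp => hu.contDiffAt (hΩ.mem_nhds hp)
  set Du : ℝ × ℝ → (ℝ × ℝ) →L[ℝ] Cn n := fderiv ℝ u with hDudef
  set D2u : ℝ × ℝ → (ℝ × ℝ) →L[ℝ] (ℝ × ℝ) →L[ℝ] Cn n := fderiv ℝ (fderiv ℝ u) with hD2udef
  have hUdiff : ∀ p ∈ Ω, HasFDerivAt u (Du p) p := fun p hp =>
    ((hCAt p hp).differentiableAt (by simp)).hasFDerivAt
  have hDuCAt : ∀ p ∈ Ω, ContDiffAt ℝ ∞ Du p := fun p hp => (hCAt p hp).fderiv_right hplus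
  have hD2uCAt : ∀ p ∈ Ω, ContDiffAt ℝ ∞ D2u p := fun p hp => (hDuCAt p hp).fderiv_right hplus
  have hDudiff : ∀ p ∈ Ω, HasFDerivAt Du (D2u p) p := fun p hp =>
    ((hDuCAt p hp).differentiableAt (by simp)).hasFDerivAt
  have hcurve_r : ∀ a b : ℝ, HasDerivAt (fun r' : ℝ => ((r', b) : ℝ × ℝ)) (1, 0) a :=
    fun a b => (hasDerivAt_id a).prodMk (hasDerivAt_const a b)
  have hcurve_t : ∀ a b : ℝ, HasDerivAt (fun t' : ℝ => ((a, t') : ℝ × ℝ)) (0, 1) b :=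
    fun a b => (hasDerivAt_const b a).prodMk (hasDerivAt_id b)
  have hder_r : ∀ a b : ℝ, a ∈ Set.Ioo (-ε) ε →
      HasDerivAt (fun r' => u (r', b)) (Du (a, b) (1, 0)) a := fun a b ha =>
    (hUdiff (a, b) (hmem ha)).comp_hasDerivAt a (hcurve_r a b)
  have hder_t : ∀ a b : ℝ, a ∈ Set.Ioo (-ε) ε →
      HasDerivAt (fun t' => u (a, t')) (Du (a, b) (0, 1)) b := fun a b ha =>
    (hUdiff (a, b) (hmem ha)).comp_hasDerivAt b (hcurve_t a b)
  have hder_rDut : ∀ a b : ℝ, a ∈ Set.Ioo (-ε) ε →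
      HasDerivAt (fun r' => Du (r', b) (0, 1)) (D2u (a, b) (1, 0) (0, 1)) a := by
    intro a b ha
    have h := ((hDudiff (a, b) (hmem ha)).comp_hasDerivAt a (hcurve_r a b)).clm_apply
      (hasDerivAt_const a ((0 : ℝ), (1 : ℝ)))
    simpa using h
  have hder_tDur : ∀ a b : ℝ, a ∈ Set.Ioo (-ε) ε →
      HasDerivAt (fun t' => Du (a, t') (1, 0)) (D2u (a, b) (0, 1) (1, 0)) b := by
    intro a b ha
    have h := ((hDudiff (a, b) (hmem ha)).comp_hasDerivAt b (hcurve_t a b)).clm_apply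
      (hasDerivAt_const b ((1 : ℝ), (0 : ℝ)))
    simpa using h
  have hsymm : ∀ a b : ℝ, a ∈ Set.Ioo (-ε) ε →
      D2u (a, b) (1, 0) (0, 1) = D2u (a, b) (0, 1) (1, 0) := fun a b ha =>
    ((hCAt (a, b) (hmem ha)).isSymmSndFDerivAt (by simpa using h2le)) (1, 0) (0, 1)
  have hDurper : ∀ a b : ℝ, a ∈ Set.Ioo (-ε) ε →
      Du (a, b + 1) (1, 0) = Du (a, b) (1, 0) := by
    intro a b ha
    have h1 := hder_r a (b + 1) ha
    have h2 := hder_r a b ha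
    have heq : (fun r' => u (r', b + 1)) = fun r' => u (r', b) :=
      funext fun r' => huper r' b
    rw [heq] at h1
    exact h1.unique h2
  have hu_c : ∀ p ∈ Ω, ContinuousAt u p := fun p hp => (hCAt p hp).continuousAt
  have hDu_c : ∀ p ∈ Ω, ContinuousAt Du p := fun p hp => (hDuCAt p hp).continuousAt
  have hD2u_c : ∀ p ∈ Ω, ContinuousAt D2u p := fun p hp => (hD2uCAt p hp).continuousAt
  have hG : ContDiff ℝ ∞ (fun p : ℝ × Cn n => fderiv ℝ (H p.1) p.2) := by
    refine ContDiff.fderiv (f := fun (p : ℝ × Cn n) (z : Cn n) => H p.1 z) (g := Prod.snd)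
      ?_ contDiff_snd hplus
    exact hH.comp ((contDiff_fst.fst).prodMk contDiff_snd)
  have hHt : ∀ t : ℝ, ContDiff ℝ ∞ (H t) := fun t =>
    hH.comp ((contDiff_const (c := t)).prodMk contDiff_id)
  set F : ℝ → ℝ → ℝ := fun ρ t => lambda0 (u (ρ, t)) (Du (ρ, t) (0, 1)) + H t (u (ρ, t))
    with hFdef
  set F' : ℝ → ℝ → ℝ := fun ρ t =>
      (1 / 2) * (omega0 (u (ρ, t)) (D2u (ρ, t) (1, 0) (0, 1)) +
        omega0 (Du (ρ, t) (1, 0)) (Du (ρ, t) (0, 1)))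
      + fderiv ℝ (H t) (u (ρ, t)) (Du (ρ, t) (1, 0)) with hF'def
  have hasF' : ∀ t : ℝ, ∀ ρ ∈ Set.Ioo (-ε) ε, HasDerivAt (fun ρ' => F ρ' t) (F' ρ t) ρ := by
    intro t ρ hρ
    have h1 := hder_r ρ t hρ
    have h2 := hder_rDut ρ t hρ
    have hlam := (HasDerivAt.omega0' h1 h2).const_mul (1 / 2 : ℝ)
    have hHd : HasFDerivAt (H t) (fderiv ℝ (H t) (u (ρ, t))) (u (ρ, t)) :=
      (((hHt t).differentiable (by simp)) (u (ρ, t))).hasFDerivAt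
    have hHterm := hHd.comp_hasDerivAt ρ h1
    have := hlam.add hHterm
    simpa [hFdef, hF'def, lambda0, mul_add, Pi.add_def, Function.comp_def] using this
  have hF'cont : ∀ p ∈ Ω, ContinuousAt (fun q : ℝ × ℝ => F' q.1 q.2) p := by
    intro p hp
    have c1 : ContinuousAt (fun q : ℝ × ℝ => D2u q (1, 0) (0, 1)) p :=
      myclm_apply (myclm_apply (hD2u_c p hp) continuousAt_const) continuousAt_const
    have c2 : ContinuousAt (fun q : ℝ × ℝ => Du q (1, 0)) p :=
      myclm_apply (hDu_c p hp) continuousAt_const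
    have c3 : ContinuousAt (fun q : ℝ × ℝ => Du q (0, 1)) p :=
      myclm_apply (hDu_c p hp) continuousAt_const
    have c4 : ContinuousAt (fun q : ℝ × ℝ => fderiv ℝ (H q.2) (u q) (Du q (1, 0))) p := by
      have hGc : ContinuousAt (fun q : ℝ × ℝ => fderiv ℝ (H q.2) (u q)) p :=
        (hG.continuous.continuousAt).comp (continuousAt_snd.prodMk (hu_c p hp))
      exact myclm_apply hGc c2
    exact (((continuousAt_omega0 (hu_c p hp) c1).add
      (continuousAt_omega0 c2 c3)).const_mul _).add c4
  have hcurve_c : ∀ ρ t : ℝ, ContinuousAt (fun t' : ℝ => ((ρ, t') : ℝ × ℝ)) t :=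
    fun ρ t => (continuous_const.prodMk continuous_id).continuousAt
  have hlamcont : ∀ ρ ∈ Set.Ioo (-ε) ε,
      Continuous (fun t => lambda0 (u (ρ, t)) (Du (ρ, t) (0, 1))) := by
    intro ρ hρ
    rw [continuous_iff_continuousAt]; intro t
    have huc : ContinuousAt (fun t' => u (ρ, t')) t := (hu_c _ (hmem hρ)).comp (hcurve_c ρ t)
    have hDuc : ContinuousAt (fun t' => Du (ρ, t') (0, 1)) t :=
      myclm_apply ((hDu_c _ (hmem hρ)).comp (hcurve_c ρ t)) continuousAt_const
    have := (continuousAt_omega0 huc hDuc).const_mul (1 / 2 : ℝ)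
    simpa [lambda0] using this
  have hHcont : ∀ ρ ∈ Set.Ioo (-ε) ε, Continuous (fun t => H t (u (ρ, t))) := by
    intro ρ hρ
    rw [continuous_iff_continuousAt]; intro t
    have huc : ContinuousAt (fun t' => u (ρ, t')) t := (hu_c _ (hmem hρ)).comp (hcurve_c ρ t)
    exact (hH.continuous.continuousAt).comp (continuousAt_id.prodMk huc)
  have hFcont : ∀ ρ ∈ Set.Ioo (-ε) ε, Continuous (fun t => F ρ t) :=
    fun ρ hρ => (hlamcont ρ hρ).add (hHcont ρ hρ)
  have hF'r₀cont : Continuous (fun t => F' r₀ t) := by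
    rw [continuous_iff_continuousAt]; intro t
    exact (hF'cont (r₀, t) (hmem hr₀)).comp (hcurve_c r₀ t)
  obtain ⟨δ, hδpos, hball⟩ := Metric.isOpen_iff.1 isOpen_Ioo r₀ hr₀
  set K : Set (ℝ × ℝ) := Metric.closedBall r₀ (δ / 2) ×ˢ Set.uIcc (0 : ℝ) 1 with hKdef
  have hKΩ : K ⊆ Ω := by
    intro q hq
    exact ⟨hball (mem_ball.mpr (lt_of_le_of_lt (mem_closedBall.mp hq.1) (half_lt_self hδpos))),
      trivial⟩
  have hKc : IsCompact K := (isCompact_closedBall _ _).prod isCompact_uIcc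
  have hcontK : ContinuousOn (fun q : ℝ × ℝ => F' q.1 q.2) K := fun q hq =>
    (hF'cont q (hKΩ hq)).continuousWithinAt
  obtain ⟨C, hC⟩ := hKc.exists_bound_of_continuousOn hcontK
  have hmeasF : ∀ᶠ ρ in nhds r₀,
      AEStronglyMeasurable (F ρ) (volume.restrict (Set.uIoc (0:ℝ) 1)) := by
    filter_upwards [isOpen_Ioo.mem_nhds hr₀] with ρ hρ
    exact (hFcont ρ hρ).aestronglyMeasurable
  have hintF : IntervalIntegrable (F r₀) volume 0 1 := (hFcont r₀ hr₀).intervalIntegrable 0 1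
  have hmeasF' : AEStronglyMeasurable (F' r₀) (volume.restrict (Set.uIoc (0:ℝ) 1)) :=
    hF'r₀cont.aestronglyMeasurable
  have hboundF' : ∀ᵐ t ∂(volume : Measure ℝ), t ∈ Set.uIoc (0:ℝ) 1 →
      ∀ ρ ∈ Metric.ball r₀ (δ / 2), ‖F' ρ t‖ ≤ C := by
    refine ae_of_all _ (fun t ht ρ hρ => ?_)
    have htK : t ∈ Set.uIcc (0:ℝ) 1 := by
      rw [Set.uIoc_of_le zero_le_one] at ht
      rw [Set.uIcc_of_le zero_le_one]
      exact Set.Ioc_subset_Icc_self ht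
    exact hC (ρ, t) ⟨Metric.ball_subset_closedBall hρ, htK⟩
  have hdiffF : ∀ᵐ t ∂(volume : Measure ℝ), t ∈ Set.uIoc (0:ℝ) 1 →
      ∀ ρ ∈ Metric.ball r₀ (δ / 2), HasDerivAt (fun ρ' => F ρ' t) (F' ρ t) ρ :=
    ae_of_all _ fun t _ ρ hρ =>
      hasF' t ρ (hball (Metric.ball_subset_ball (half_le_self hδpos.le) hρ))
  have main := intervalIntegral.hasDerivAt_integral_of_dominated_loc_of_deriv_le
    (Metric.ball_mem_nhds r₀ (half_pos hδpos)) hmeasF hintF hmeasF' hboundF' intervalIntegrable_const hdiffF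
  have hasD : HasDerivAt (fun ρ => ∫ t in (0:ℝ)..1, F ρ t) (∫ t in (0:ℝ)..1, F' r₀ t) r₀ :=
    main.2
  have hActEq : ∀ ρ ∈ Set.Ioo (-ε) ε,
      actionAH H (fun t => u (ρ, t)) = -∫ t in (0:ℝ)..1, F ρ t := by
    intro ρ hρ
    have hdt : deriv (fun t => u (ρ, t)) = fun t => Du (ρ, t) (0, 1) :=
      funext fun t => (hder_t ρ t hρ).deriv
    have hadd : ∫ t in (0:ℝ)..1, (lambda0 (u (ρ, t)) (Du (ρ, t) (0, 1)) + H t (u (ρ, t))) =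
        (∫ t in (0:ℝ)..1, lambda0 (u (ρ, t)) (Du (ρ, t) (0, 1))) +
          ∫ t in (0:ℝ)..1, H t (u (ρ, t)) :=
      intervalIntegral.integral_add ((hlamcont ρ hρ).intervalIntegrable 0 1)
        ((hHcont ρ hρ).intervalIntegrable 0 1)
    simp only [actionAH, hdt, hFdef]
    rw [hadd]
    ring
  have hEvEq : (fun ρ => actionAH H (fun t => u (ρ, t)))
      =ᶠ[nhds r₀] (fun ρ => -∫ t in (0:ℝ)..1, F ρ t) := by
    filter_upwards [isOpen_Ioo.mem_nhds hr₀] with ρ hρ using hActEq ρ hρ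
  rw [hEvEq.deriv_eq, (show HasDerivAt (fun ρ => -∫ t in (0:ℝ)..1, F ρ t) _ r₀ from hasD.neg).deriv]
  have hint1 : ∀ t : ℝ, deriv (fun r' => u (r', t)) r₀ = Du (r₀, t) (1, 0) :=
    fun t => (hder_r r₀ t hr₀).deriv
  have hint2 : ∀ t : ℝ, deriv (fun t' => u (r₀, t')) t = Du (r₀, t) (0, 1) :=
    fun t => (hder_t r₀ t hr₀).deriv
  simp only [hint1, hint2]
  set g : ℝ → ℝ := fun t => (1 / 2) * omega0 (u (r₀, t)) (Du (r₀, t) (1, 0)) with hgdef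
  set g' : ℝ → ℝ := fun t => (1 / 2) * (omega0 (u (r₀, t)) (D2u (r₀, t) (0, 1) (1, 0)) +
      omega0 (Du (r₀, t) (0, 1)) (Du (r₀, t) (1, 0))) with hg'def
  have hasg : ∀ t : ℝ, HasDerivAt g (g' t) t := fun t =>
    (HasDerivAt.omega0' (hder_t r₀ t hr₀) (hder_tDur r₀ t hr₀)).const_mul (1 / 2 : ℝ)
  have hg'cont : Continuous g' := by
    rw [continuous_iff_continuousAt]; intro t
    have h1 : ContinuousAt (fun t' => u (r₀, t')) t :=
      (hu_c _ (hmem hr₀)).comp (hcurve_c r₀ t)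
    have h2 : ContinuousAt (fun t' => D2u (r₀, t') (0, 1) (1, 0)) t :=
      myclm_apply (myclm_apply ((hD2u_c _ (hmem hr₀)).comp (hcurve_c r₀ t)) continuousAt_const)
        continuousAt_const
    have h3 : ContinuousAt (fun t' => Du (r₀, t') (0, 1)) t :=
      myclm_apply ((hDu_c _ (hmem hr₀)).comp (hcurve_c r₀ t)) continuousAt_const
    have h4 : ContinuousAt (fun t' => Du (r₀, t') (1, 0)) t :=
      myclm_apply ((hDu_c _ (hmem hr₀)).comp (hcurve_c r₀ t)) continuousAt_const
    exact ((continuousAt_omega0 h1 h2).add (continuousAt_omega0 h3 h4)).const_mul _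
  have hωcont : Continuous
      (fun t => omega0 (Du (r₀, t) (1, 0)) (Du (r₀, t) (0, 1) - XH t (u (r₀, t)))) := by
    rw [continuous_iff_continuousAt]; intro t
    have h1 : ContinuousAt (fun t' => u (r₀, t')) t :=
      (hu_c _ (hmem hr₀)).comp (hcurve_c r₀ t)
    have h3 : ContinuousAt (fun t' => Du (r₀, t') (0, 1)) t :=
      myclm_apply ((hDu_c _ (hmem hr₀)).comp (hcurve_c r₀ t)) continuousAt_const
    have h4 : ContinuousAt (fun t' => Du (r₀, t') (1, 0)) t :=
      myclm_apply ((hDu_c _ (hmem hr₀)).comp (hcurve_c r₀ t)) continuousAt_const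
    have hXHat : ContinuousAt (fun t' => XH t' (u (r₀, t'))) t :=
      ((xh_smooth H hH XH hXH).continuous.continuousAt).comp (continuousAt_id.prodMk h1)
    exact continuousAt_omega0 h4 (h3.sub hXHat)
  have hg10 : g 1 = g 0 := by
    have e1 : u (r₀, 1) = u (r₀, 0) := by simpa using huper r₀ 0
    have e2 : Du (r₀, 1) (1, 0) = Du (r₀, 0) (1, 0) := by simpa using hDurper r₀ 0 hr₀
    simp only [hgdef, e1, e2]
  have hFTC : ∫ t in (0:ℝ)..1, g' t = 0 := by
    rw [intervalIntegral.integral_eq_sub_of_hasDerivAt (fun t _ => hasg t)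
      (hg'cont.intervalIntegrable 0 1), hg10, sub_self]
  have hpt : ∀ t : ℝ, F' r₀ t =
      omega0 (Du (r₀, t) (1, 0)) (Du (r₀, t) (0, 1) - XH t (u (r₀, t))) + g' t := by
    intro t
    have hsym := hsymm r₀ t hr₀
    have hx : fderiv ℝ (H t) (u (r₀, t)) (Du (r₀, t) (1, 0)) =
        omega0 (XH t (u (r₀, t))) (Du (r₀, t) (1, 0)) := (hXH t _ _).symm
    simp only [hF'def, hg'def]
    rw [omega0_sub_right, hx, ← hsym,
      omega0_antisymm (Du (r₀, t) (0, 1)) (Du (r₀, t) (1, 0)),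
      omega0_antisymm (XH t (u (r₀, t))) (Du (r₀, t) (1, 0))]
    ring
  simp only [hpt]
  rw [intervalIntegral.integral_add (hωcont.intervalIntegrable 0 1)
    (hg'cont.intervalIntegrable 0 1), hFTC, add_zero]

/-- First variation of the Hamiltonian action. `H` is smooth and 1-periodic in `t`,
`X_H(t,·)` is the Hamiltonian vector field (characterized by `ω₀(X_H(t,z), v) = dH_t(z)v`),
and `u : (-ε,ε) × ℝ → ℂⁿ` is smooth and 1-periodic in `t`. Then
`d/dr A_H(u(r,·)) = -∫₀¹ ω₀(∂_r u, ∂_t u - X_H(t,u)) dt`.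
In particular, a smooth 1-periodic loop `γ` is a critical point of `A_H` (all smooth
periodic variations through `γ` have vanishing derivative of the action at `r = 0`)
iff `γ` is a 1-periodic solution of `γ'(t) = X_H(t, γ(t))`. -/
theorem first_variation_of_action {n : ℕ}
    (H : ℝ → Cn n → ℝ) (hH : ContDiff ℝ ∞ (fun p : ℝ × Cn n => H p.1 p.2))
    (hHper : ∀ (t : ℝ) (z : Cn n), H (t + 1) z = H t z)
    (XH : ℝ → Cn n → Cn n)
    (hXH : ∀ (t : ℝ) (z v : Cn n), omega0 (XH t z) v = fderiv ℝ (H t) z v)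
    (ε : ℝ) (hε : 0 < ε) (u : ℝ × ℝ → Cn n)
    (hu : ContDiffOn ℝ ∞ u (Set.Ioo (-ε) ε ×ˢ Set.univ))
    (huper : ∀ r t : ℝ, u (r, t + 1) = u (r, t)) :
    (∀ r ∈ Set.Ioo (-ε) ε,
      deriv (fun r' => actionAH H (fun t => u (r', t))) r =
        -∫ t in (0:ℝ)..1,
            omega0 (deriv (fun r' => u (r', t)) r)
              (deriv (fun t' => u (r, t')) t - XH t (u (r, t)))) ∧
    (∀ γ : ℝ → Cn n, ContDiff ℝ ∞ γ → (∀ t : ℝ, γ (t + 1) = γ t) →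
      ((∀ w : ℝ × ℝ → Cn n, ContDiff ℝ ∞ w → (∀ r t : ℝ, w (r, t + 1) = w (r, t)) →
          (∀ t : ℝ, w (0, t) = γ t) →
          deriv (fun r => actionAH H (fun t => w (r, t))) 0 = 0) ↔
        (∀ t : ℝ, deriv γ t = XH t (γ t)))) := by
  refine ⟨key H hH XH hXH ε hε u hu huper, fun γ hγ hγper => ⟨fun hcrit t₀ => ?_, ?_⟩⟩
  · -- forward direction: criticality implies the Hamiltonian equation
    set g : ℝ → Cn n := fun t => deriv γ t - XH t (γ t) with hgdef
    have hXHs := xh_smooth H hH XH hXH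
    have hγ' : ContDiff ℝ ∞ (deriv γ) := (contDiff_infty_iff_deriv.mp hγ).2
    have hgc : ContDiff ℝ ∞ g := hγ'.sub (hXHs.comp (contDiff_id.prodMk hγ))
    have hγ'per : ∀ t : ℝ, deriv γ (t + 1) = deriv γ t := by
      intro t
      have h1 : (fun s => γ (s + 1)) = γ := funext fun s => hγper s
      have h2 := deriv_comp_add_const γ 1 t
      rw [h1] at h2
      exact h2.symm
    have hgper : ∀ t : ℝ, g (t + 1) = g t := by
      intro t
      simp only [hgdef, hγ'per t, hγper t, xh_per H hHper XH hXH t (γ t)]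
    set w : ℝ × ℝ → Cn n := fun p => γ p.2 + p.1 • (Complex.I • g p.2) with hwdef
    have hwsmooth : ContDiff ℝ ∞ w :=
      (hγ.comp contDiff_snd).add
        (contDiff_fst.smul ((hgc.comp contDiff_snd).const_smul Complex.I))
    have hwper : ∀ r t : ℝ, w (r, t + 1) = w (r, t) := by
      intro r t; simp only [hwdef, hγper t, hgper t]
    have hw0 : ∀ t : ℝ, w (0, t) = γ t := by
      intro t; simp [hwdef]
    have h0 := hcrit w hwsmooth hwper hw0
    have hkey := key H hH XH hXH 1 one_pos w (hwsmooth.contDiffOn) hwper 0 (by norm_num)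
    rw [h0] at hkey
    have hderw_r : ∀ t : ℝ, deriv (fun r' => w (r', t)) 0 = Complex.I • g t := by
      intro t
      have h : HasDerivAt (fun r' : ℝ => γ t + r' • (Complex.I • g t)) (Complex.I • g t) 0 := by
        simpa using ((hasDerivAt_id (0 : ℝ)).smul_const (Complex.I • g t)).const_add (γ t)
      exact h.deriv
    have hwt : (fun t' => w (0, t')) = γ := funext fun t' => hw0 t'
    have heq2 : ∀ t : ℝ,
        omega0 (deriv (fun r' => w (r', t)) 0)
          (deriv (fun t' => w (0, t')) t - XH t (w (0, t))) = -‖g t‖ ^ 2 := by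
      intro t
      rw [hderw_r t, hwt, hw0 t]
      exact omega0_I_smul_self (g t)
    have hintzero : ∫ t in (0:ℝ)..1, ‖g t‖ ^ 2 = 0 := by
      have h2 := hkey
      simp only [heq2] at h2
      rw [intervalIntegral.integral_neg, neg_neg] at h2
      exact h2.symm
    have hcont : Continuous (fun t => ‖g t‖ ^ 2) := (hgc.continuous.norm).pow 2
    have hzero : ∀ s ∈ Set.Icc (0:ℝ) 1, g s = 0 := by
      by_contra hne
      push_neg at hne
      obtain ⟨s, hs, hgs⟩ := hne
      have hpos : (0:ℝ) < ∫ t in (0:ℝ)..1, ‖g t‖ ^ 2 := by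
        refine intervalIntegral.integral_pos one_pos hcont.continuousOn
          (fun x _ => by positivity) ⟨s, hs, ?_⟩
        have : 0 < ‖g s‖ := norm_pos_iff.mpr hgs
        positivity
      rw [hintzero] at hpos
      exact lt_irrefl 0 hpos
    have hper : Function.Periodic g 1 := hgper
    have hfr : g t₀ = g (Int.fract t₀) := by
      have h := hper.sub_int_mul_eq (x := t₀) ⌊t₀⌋
      rw [mul_one] at h
      rw [Int.fract]
      exact h.symm
    have : g t₀ = 0 := by
      rw [hfr]
      exact hzero _ ⟨Int.fract_nonneg t₀, (Int.fract_lt_one t₀).le⟩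
    rwa [hgdef, sub_eq_zero] at this
  · -- backward direction
    intro hsol w hw hwper hw0
    have hkey := key H hH XH hXH 1 one_pos w hw.contDiffOn hwper 0 (by norm_num)
    rw [hkey]
    have hwt : (fun t' => w (0, t')) = γ := funext hw0
    have hzero : ∀ t : ℝ,
        deriv (fun t' => w (0, t')) t - XH t (w (0, t)) = 0 := by
      intro t
      rw [hwt, hw0 t, hsol t, sub_self]
    simp only [hzero, omega0_zero_right]
    simp
end
end

section
/- Let H : ℝ × ℝ × ℂⁿ → ℝ, (s,t,z) ↦ H(s,t,z), be smooth, 1-periodic in t, and monotone in s: ∂H/∂s(s,t,z) ≥ 0 for all (s,t,z). Let u : ℝ × ℝ → ℂⁿ be smooth, 1-periodic in t, and satisfy the s-dependent Floer equation ∂_s u + i ∂_t u = ∇H(s, t, u), where ∇H is the gradient in z. Then for every s: d/ds [A_{H(s,·,·)}(u(s,·))] = −∫₀¹ |∂_s u(s,t)|² dt − ∫₀¹ (∂H/∂s)(s,t,u(s,t)) dt ≤ 0; in particular the action s ↦ A_{H(s,·,·)}(u(s,·)) is nonincreasing along solutions of the parameterized Floer equation. -/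
open scoped ContDiff
noncomputable section

/-- The real inner product `⟨u,v⟩ = Re ⟪u,v⟫` on `ℂⁿ`. -/
def rinner {n : ℕ} (u v : Cn n) : ℝ := (inner ℂ u v : ℂ).re

/-! ### Auxiliary lemmas -/

lemma re_inner_self' {n : ℕ} (a : Cn n) : (inner ℂ a a : ℂ).re = ‖a‖^2 := by
  have := inner_self_eq_norm_sq (𝕜 := ℂ) (x := a)
  simpa [RCLike.re_to_complex] using this

lemma key_alg' {n : ℕ} (a b : Cn n) :
    (inner ℂ (a + Complex.I • b) a : ℂ).re = ‖a‖^2 + (inner ℂ b a : ℂ).im := by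
  rw [inner_add_left, inner_smul_left, Complex.add_re, re_inner_self']
  congr 1
  simp [Complex.mul_re]

lemma im_anti' {n : ℕ} (a b : Cn n) : (inner ℂ a b : ℂ).im = -(inner ℂ b a : ℂ).im := by
  rw [← inner_conj_symm]
  exact Complex.conj_im _

/-- partial derivative in the first variable -/
lemma hasDerivAt_fst' {E : Type*} [NormedAddCommGroup E] [NormedSpace ℝ E]
    {f : ℝ × ℝ → E} {s t : ℝ} (hf : DifferentiableAt ℝ f (s, t)) :
    HasDerivAt (fun s' => f (s', t)) (fderiv ℝ f (s, t) (1, 0)) s := by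
  have h1 : HasDerivAt (fun s' : ℝ => (s', t)) ((1 : ℝ), (0 : ℝ)) s :=
    (hasDerivAt_id _).prodMk (hasDerivAt_const _ _)
  simpa [Function.comp_def] using hf.hasFDerivAt.comp_hasDerivAt s h1

/-- partial derivative in the second variable -/
lemma hasDerivAt_snd' {E : Type*} [NormedAddCommGroup E] [NormedSpace ℝ E]
    {f : ℝ × ℝ → E} {s t : ℝ} (hf : DifferentiableAt ℝ f (s, t)) :
    HasDerivAt (fun t' => f (s, t')) (fderiv ℝ f (s, t) (0, 1)) t := by
  have h1 : HasDerivAt (fun t' : ℝ => (s, t')) ((0 : ℝ), (1 : ℝ)) t :=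
    (hasDerivAt_const _ _).prodMk (hasDerivAt_id _)
  simpa [Function.comp_def] using hf.hasFDerivAt.comp_hasDerivAt t h1

/-- mixed second partials commute -/
lemma mixed_partial_symm' {E : Type*} [NormedAddCommGroup E] [NormedSpace ℝ E] {f : ℝ × ℝ → E}
    (hf : ContDiff ℝ ∞ f) (p : ℝ × ℝ) (a b : ℝ × ℝ) :
    fderiv ℝ (fun q => fderiv ℝ f q a) p b = fderiv ℝ (fun q => fderiv ℝ f q b) p a := by
  have hdf : ContDiff ℝ ∞ (fderiv ℝ f) := (contDiff_infty_iff_fderiv.mp (by exact_mod_cast hf)).2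
  have hder : ∀ q, HasFDerivAt f (fderiv ℝ f q) q :=
    fun q => (hf.differentiable (by simp)).differentiableAt.hasFDerivAt
  have hder2 : HasFDerivAt (fderiv ℝ f) (fderiv ℝ (fderiv ℝ f) p) p :=
    (hdf.differentiable (by simp)).differentiableAt.hasFDerivAt
  have hsymm := second_derivative_symmetric hder hder2 b a
  have e1 : ∀ c : ℝ × ℝ, fderiv ℝ (fun q => fderiv ℝ f q c) p
      = ((fderiv ℝ f p).comp (0 : (ℝ × ℝ) →L[ℝ] (ℝ × ℝ)) + (fderiv ℝ (fderiv ℝ f) p).flip c) :=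
    fun c => (hder2.clm_apply (hasFDerivAt_const c p)).fderiv
  rw [e1 a, e1 b]
  simpa using hsymm

lemma hasDerivAt_inner_im' {n : ℕ} {f g : ℝ → Cn n} {f' g' : Cn n} {x : ℝ}
    (hf : HasDerivAt f f' x) (hg : HasDerivAt g g' x) :
    HasDerivAt (fun t => (inner ℂ (f t) (g t) : ℂ).im)
      ((inner ℂ (f x) g' : ℂ).im + (inner ℂ f' (g x) : ℂ).im) x := by
  have h := hf.inner ℂ hg
  have h2 := (Complex.imCLM.hasFDerivAt).comp_hasDerivAt x h
  simpa only [Function.comp_def, map_add, Complex.imCLM_apply] using h2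

/-- The action decreases along solutions of the `s`-dependent Floer equation for a
homotopy of Hamiltonians that is monotone increasing in `s`: if
`∂_s u + i ∂_t u = ∇H(s,t,u)` (with `∇H` the gradient in `z` for the real inner
product `Re⟪·,·⟫`), then
`d/ds A_{H(s,·,·)}(u(s,·)) = -∫₀¹ |∂_s u|² dt - ∫₀¹ ∂H/∂s(s,t,u) dt ≤ 0`,
and `s ↦ A_{H(s,·,·)}(u(s,·))` is nonincreasing. -/
theorem action_decreases_along_parameterized_floer {n : ℕ}
    (H : ℝ → ℝ → Cn n → ℝ)
    (hH : ContDiff ℝ ∞ (fun p : ℝ × ℝ × Cn n => H p.1 p.2.1 p.2.2))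
    (hHper : ∀ (s t : ℝ) (z : Cn n), H s (t + 1) z = H s t z)
    (hmono : ∀ (s t : ℝ) (z : Cn n), 0 ≤ deriv (fun s' => H s' t z) s)
    (gradH : ℝ → ℝ → Cn n → Cn n)
    (hgrad : ∀ (s t : ℝ) (z v : Cn n), rinner (gradH s t z) v = fderiv ℝ (H s t) z v)
    (u : ℝ × ℝ → Cn n) (hu : ContDiff ℝ ∞ u)
    (huper : ∀ s t : ℝ, u (s, t + 1) = u (s, t))
    (hfloer : ∀ s t : ℝ,
      deriv (fun s' => u (s', t)) s + Complex.I • deriv (fun t' => u (s, t')) t =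
        gradH s t (u (s, t))) :
    (∀ s : ℝ,
      deriv (fun s' => actionAH (H s') (fun t => u (s', t))) s =
        (-∫ t in (0:ℝ)..1, ‖deriv (fun s' => u (s', t)) s‖ ^ 2)
          - ∫ t in (0:ℝ)..1, deriv (fun s' => H s' t (u (s, t))) s) ∧
    (∀ s : ℝ, deriv (fun s' => actionAH (H s') (fun t => u (s', t))) s ≤ 0) ∧
    Antitone (fun s => actionAH (H s) (fun t => u (s, t))) := by
  classical
  set G : ℝ × ℝ × Cn n → ℝ := fun p => H p.1 p.2.1 p.2.2 with hG_def
  have hud : Differentiable ℝ u := hu.differentiable (by simp)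
  have hGd : Differentiable ℝ G := hH.differentiable (by simp)
  have hdu : ContDiff ℝ ∞ (fderiv ℝ u) := (contDiff_infty_iff_fderiv.mp (by exact_mod_cast hu)).2
  set w : ℝ × ℝ → Cn n := fun p => fderiv ℝ u p (1, 0) with hw_def
  set v : ℝ × ℝ → Cn n := fun p => fderiv ℝ u p (0, 1) with hv_def
  have hwCD : ContDiff ℝ ∞ w := hdu.clm_apply contDiff_const
  have hvCD : ContDiff ℝ ∞ v := hdu.clm_apply contDiff_const
  have hwd : Differentiable ℝ w := hwCD.differentiable (by simp)
  have hvd : Differentiable ℝ v := hvCD.differentiable (by simp)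
  have hws : ∀ s t : ℝ, HasDerivAt (fun s' => u (s', t)) (w (s, t)) s :=
    fun s t => hasDerivAt_fst' (hud _)
  have hvt : ∀ s t : ℝ, HasDerivAt (fun t' => u (s, t')) (v (s, t)) t :=
    fun s t => hasDerivAt_snd' (hud _)
  have hderiv_s : ∀ s t : ℝ, deriv (fun s' => u (s', t)) s = w (s, t) :=
    fun s t => (hws s t).deriv
  have hderiv_t : ∀ s t : ℝ, deriv (fun t' => u (s, t')) t = v (s, t) :=
    fun s t => (hvt s t).deriv
  -- the Floer equation in terms of w, v
  have hfl : ∀ s t : ℝ, w (s, t) + Complex.I • v (s, t) = gradH s t (u (s, t)) := by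
    intro s t
    rw [← hderiv_s, ← hderiv_t]; exact hfloer s t
  -- slice derivatives of H
  have hHsDeriv : ∀ (s t : ℝ) (z : Cn n),
      HasDerivAt (fun s' => H s' t z) (fderiv ℝ G (s, t, z) (1, 0, 0)) s := by
    intro s t z
    have h1 : HasDerivAt (fun s' : ℝ => ((s', t, z) : ℝ × ℝ × Cn n)) ((1:ℝ), (0:ℝ), (0 : Cn n)) s :=
      (hasDerivAt_id _).prodMk (hasDerivAt_const _ _)
    simpa [Function.comp_def] using (hGd _).hasFDerivAt.comp_hasDerivAt s h1
  have hHz : ∀ (s t : ℝ) (z vv : Cn n),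
      fderiv ℝ (H s t) z vv = fderiv ℝ G (s, t, z) (0, 0, vv) := by
    intro s t z vv
    have h1 : HasFDerivAt (fun z' : Cn n => ((s, t, z') : ℝ × ℝ × Cn n))
        (((0 : Cn n →L[ℝ] ℝ)).prod (((0 : Cn n →L[ℝ] ℝ)).prod (ContinuousLinearMap.id ℝ (Cn n)))) z :=
      (hasFDerivAt_const _ _).prodMk ((hasFDerivAt_const _ _).prodMk (hasFDerivAt_id _))
    have h2 := (hGd _).hasFDerivAt.comp z h1
    have h3 : fderiv ℝ (fun z' : Cn n => G (s, t, z')) z =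
        (fderiv ℝ G ((s, t, z) : ℝ × ℝ × Cn n)).comp
          ((((0 : Cn n →L[ℝ] ℝ)).prod (((0 : Cn n →L[ℝ] ℝ)).prod (ContinuousLinearMap.id ℝ (Cn n))))) :=
      h2.fderiv
    have h4 : (H s t) = fun z' : Cn n => G (s, t, z') := rfl
    rw [h4, h3]
    simp
  -- key auxiliary functions
  set F : ℝ × ℝ → ℝ := fun p => lambda0 (u p) (v p) + G (p.1, p.2, u p) with hF_def
  set g : ℝ × ℝ → ℝ := fun p => (1 / 2) * (inner ℂ (u p) (w p) : ℂ).im with hg_def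
  set dtg : ℝ × ℝ → ℝ := fun p =>
    (1 / 2) * ((inner ℂ (u p) (fderiv ℝ w p (0, 1)) : ℂ).im + (inner ℂ (v p) (w p) : ℂ).im)
    with hdtg_def
  set Hs : ℝ × ℝ → ℝ := fun p => fderiv ℝ G (p.1, p.2, u p) (1, 0, 0) with hHs_def
  set Phi : ℝ × ℝ → ℝ := fun p => dtg p + (‖w p‖ ^ 2 + Hs p) with hPhi_def
  -- continuity facts
  have hu_c : Continuous u := hu.continuous
  have hG_c : Continuous G := hH.continuous
  have hw_c : Continuous w := hwCD.continuous
  have hv_c : Continuous v := hvCD.continuous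
  have hdw_c : Continuous (fun p => fderiv ℝ w p (0, 1)) :=
    (((contDiff_infty_iff_fderiv.mp (by exact_mod_cast hwCD)).2).clm_apply contDiff_const).continuous
  have hinner_c : ∀ (f g : ℝ × ℝ → Cn n), Continuous f → Continuous g →
      Continuous (fun p => (inner ℂ (f p) (g p) : ℂ).im) := by
    intro f g hf hg
    exact Complex.continuous_im.comp (hf.inner hg)
  have hdtg_c : Continuous dtg :=
    continuous_const.mul ((hinner_c _ _ hu_c hdw_c).add (hinner_c _ _ hv_c hw_c))
  have hq_c : Continuous (fun p : ℝ × ℝ => ((p.1, p.2, u p) : ℝ × ℝ × Cn n)) :=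
    continuous_fst.prodMk (continuous_snd.prodMk hu_c)
  have hfderivG_c : Continuous (fderiv ℝ G) :=
    ((contDiff_infty_iff_fderiv.mp (by exact_mod_cast hH)).2).continuous
  have hHs_c : Continuous Hs := (hfderivG_c.comp hq_c).clm_apply continuous_const
  have hF_c : Continuous F := by
    rw [hF_def]
    have : Continuous (fun p : ℝ × ℝ => lambda0 (u p) (v p)) := by
      unfold lambda0 omega0
      exact continuous_const.mul (hinner_c _ _ hu_c hv_c)
    exact this.add (hG_c.comp hq_c)
  have hPhi_c : Continuous Phi :=
    hdtg_c.add ((hw_c.norm.pow 2).add hHs_c)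
  have cst : ∀ s' : ℝ, Continuous (fun t : ℝ => ((s', t) : ℝ × ℝ)) :=
    fun s' => continuous_const.prodMk continuous_id
  -- ∂g/∂t
  have hg_t : ∀ s t : ℝ, HasDerivAt (fun t' => g (s, t')) (dtg (s, t)) t := by
    intro s t
    have h2 : HasDerivAt (fun t' => w (s, t')) (fderiv ℝ w (s, t) (0, 1)) t :=
      hasDerivAt_snd' (hwd _)
    have h3 := (hasDerivAt_inner_im' (hvt s t) h2).const_mul (1 / 2 : ℝ)
    rw [hg_def, hdtg_def]
    exact h3
  -- ∂F/∂s
  have hF_s : ∀ s t : ℝ, HasDerivAt (fun s' => F (s', t)) (Phi (s, t)) s := by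
    intro s t
    have hv_s : HasDerivAt (fun s' => v (s', t)) (fderiv ℝ w (s, t) (0, 1)) s := by
      have h0 := hasDerivAt_fst' (f := v) (hvd (s, t))
      have he : fderiv ℝ v (s, t) (1, 0) = fderiv ℝ w (s, t) (0, 1) := by
        rw [hv_def, hw_def]
        exact mixed_partial_symm' hu (s, t) (0, 1) (1, 0)
      rwa [he] at h0
    have hinner : HasDerivAt (fun s' => (inner ℂ (u (s', t)) (v (s', t)) : ℂ).im)
        ((inner ℂ (u (s, t)) (fderiv ℝ w (s, t) (0, 1)) : ℂ).im
          + (inner ℂ (w (s, t)) (v (s, t)) : ℂ).im) s :=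
      hasDerivAt_inner_im' (hws s t) hv_s
    have hlam : HasDerivAt (fun s' => lambda0 (u (s', t)) (v (s', t)))
        ((1 / 2 : ℝ) * ((inner ℂ (u (s, t)) (fderiv ℝ w (s, t) (0, 1)) : ℂ).im
          + (inner ℂ (w (s, t)) (v (s, t)) : ℂ).im)) s := by
      unfold lambda0 omega0
      exact hinner.const_mul (1 / 2 : ℝ)
    have hcurve : HasDerivAt (fun s' : ℝ => ((s', t, u (s', t)) : ℝ × ℝ × Cn n))
        ((1:ℝ), (0:ℝ), w (s, t)) s :=
      (hasDerivAt_id _).prodMk ((hasDerivAt_const _ _).prodMk (hws s t))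
    have hGcomp : HasDerivAt (fun s' => G (s', t, u (s', t)))
        (fderiv ℝ G (s, t, u (s, t)) ((1:ℝ), (0:ℝ), w (s, t))) s := by
      simpa [Function.comp_def] using (hGd _).hasFDerivAt.comp_hasDerivAt s hcurve
    have hsum := hlam.add hGcomp
    have hval : (1 / 2 : ℝ) * ((inner ℂ (u (s, t)) (fderiv ℝ w (s, t) (0, 1)) : ℂ).im
          + (inner ℂ (w (s, t)) (v (s, t)) : ℂ).im)
        + fderiv ℝ G (s, t, u (s, t)) ((1:ℝ), (0:ℝ), w (s, t)) = Phi (s, t) := by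
      have hsplit : fderiv ℝ G (s, t, u (s, t)) ((1:ℝ), (0:ℝ), w (s, t))
          = Hs (s, t) + fderiv ℝ G (s, t, u (s, t)) ((0:ℝ), (0:ℝ), w (s, t)) := by
        have hd : ((1:ℝ), (0:ℝ), w (s, t))
            = ((1:ℝ), (0:ℝ), (0 : Cn n)) + ((0:ℝ), (0:ℝ), w (s, t)) := by
          simp [Prod.ext_iff]
        rw [hd, map_add, hHs_def]
      have hz : fderiv ℝ G (s, t, u (s, t)) ((0:ℝ), (0:ℝ), w (s, t))
          = rinner (gradH s t (u (s, t))) (w (s, t)) := by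
        rw [hgrad, hHz]
      have hr : rinner (gradH s t (u (s, t))) (w (s, t))
          = ‖w (s, t)‖ ^ 2 + (inner ℂ (v (s, t)) (w (s, t)) : ℂ).im := by
        rw [← hfl s t]
        exact key_alg' _ _
      rw [hsplit, hz, hr, hPhi_def, hdtg_def, im_anti' (w (s, t)) (v (s, t))]
      ring
    rw [hF_def]
    simpa only [hval, Pi.add_def] using hsum
  -- integrability in t
  have hF_int : ∀ s' : ℝ, IntervalIntegrable (fun t => F (s', t)) MeasureTheory.volume 0 1 :=
    fun s' => (hF_c.comp (cst s')).intervalIntegrable 0 1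
  have hlam_int : ∀ s' : ℝ,
      IntervalIntegrable (fun t => lambda0 (u (s', t)) (v (s', t))) MeasureTheory.volume 0 1 := by
    intro s'
    have : Continuous (fun t : ℝ => lambda0 (u (s', t)) (v (s', t))) := by
      unfold lambda0 omega0
      exact continuous_const.mul
        ((hinner_c _ _ hu_c hv_c).comp (cst s'))
    exact this.intervalIntegrable 0 1
  have hH_int : ∀ s' : ℝ,
      IntervalIntegrable (fun t => H s' t (u (s', t))) MeasureTheory.volume 0 1 := by
    intro s'
    have : Continuous (fun t : ℝ => G (s', t, u (s', t))) :=
      (hG_c.comp hq_c).comp (cst s')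
    exact this.intervalIntegrable 0 1
  -- the action as a single integral
  have hA : ∀ s' : ℝ, actionAH (H s') (fun t => u (s', t)) = -∫ t in (0:ℝ)..1, F (s', t) := by
    intro s'
    unfold actionAH
    have h1 : (∫ t in (0:ℝ)..1, lambda0 (u (s', t)) (deriv (fun t'' => u (s', t'')) t))
        = ∫ t in (0:ℝ)..1, lambda0 (u (s', t)) (v (s', t)) := by
      congr 1
      funext t
      rw [hderiv_t]
    rw [h1, hF_def]
    rw [intervalIntegral.integral_add (hlam_int s') (hH_int s')]
    ring
  -- differentiation under the integral
  have key : ∀ s : ℝ, HasDerivAt (fun s' => ∫ t in (0:ℝ)..1, F (s', t))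
      (∫ t in (0:ℝ)..1, Phi (s, t)) s := by
    intro s
    have hK : IsCompact ((Set.Icc (s - 1) (s + 1)) ×ˢ (Set.Icc (-1 : ℝ) 2)) :=
      isCompact_Icc.prod isCompact_Icc
    obtain ⟨C, hC⟩ := hK.exists_bound_of_continuousOn hPhi_c.continuousOn
    have h := intervalIntegral.hasDerivAt_integral_of_dominated_loc_of_deriv_le
      (F := fun s' t => F (s', t)) (F' := fun s' t => Phi (s', t)) (x₀ := s)
      (a := 0) (b := 1) (bound := fun _ => C) (s := Metric.ball s 1) (Metric.ball_mem_nhds s one_pos)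
      (Filter.Eventually.of_forall fun x =>
        ((hF_c.comp (cst x)).aestronglyMeasurable))
      (hF_int s)
      ((hPhi_c.comp (cst s)).aestronglyMeasurable)
      (Filter.Eventually.of_forall fun t ht x hx => by
        apply hC (x, t)
        constructor
        · have := Metric.mem_ball.mp hx
          rw [Real.dist_eq] at this
          constructor <;> [linarith [abs_lt.mp this |>.1]; linarith [abs_lt.mp this |>.2]]
        · rw [Set.uIoc_of_le (by norm_num : (0:ℝ) ≤ 1)] at ht
          exact ⟨by linarith [ht.1], by linarith [ht.2]⟩)
      (intervalIntegrable_const)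
      (Filter.Eventually.of_forall fun t ht x hx => hF_s x t)
    exact h.2
  -- periodicity of fderiv and g
  have hfp : ∀ s : ℝ, fderiv ℝ u (s, 1) = fderiv ℝ u (s, 0) := by
    intro s
    have hfun : (fun q : ℝ × ℝ => u (q + ((0 : ℝ), (1 : ℝ)))) = u := by
      funext q
      have hq : q + ((0 : ℝ), (1 : ℝ)) = (q.1, q.2 + 1) := by
        ext <;> simp
      rw [hq, huper]
    have htr : HasFDerivAt (fun q : ℝ × ℝ => q + ((0 : ℝ), (1 : ℝ)))
        (ContinuousLinearMap.id ℝ (ℝ × ℝ)) ((s, 0) : ℝ × ℝ) := by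
      simpa using (hasFDerivAt_id ((s, 0) : ℝ × ℝ)).add_const ((0 : ℝ), (1 : ℝ))
    have h1 : HasFDerivAt (fun q : ℝ × ℝ => u (q + ((0 : ℝ), (1 : ℝ))))
        (fderiv ℝ u (((s, 0) : ℝ × ℝ) + ((0 : ℝ), (1 : ℝ)))) (s, 0) := by
      simpa [Function.comp_def] using ((hud _).hasFDerivAt.comp ((s, 0) : ℝ × ℝ) htr)
    rw [hfun] at h1
    have h2 := h1.fderiv
    have h3 : (((s, 0) : ℝ × ℝ) + ((0 : ℝ), (1 : ℝ))) = ((s, 1) : ℝ × ℝ) := by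
      ext <;> simp
    rw [h3] at h2
    exact h2.symm
  have hgper : ∀ s : ℝ, g (s, 1) = g (s, 0) := by
    intro s
    have h1 : u (s, 1) = u (s, 0) := by simpa using huper s 0
    have h2 : w (s, 1) = w (s, 0) := by simp only [hw_def]; rw [hfp s]
    simp only [hg_def]
    rw [h1, h2]
  -- integral of dtg vanishes
  have hdtg_zero : ∀ s : ℝ, (∫ t in (0:ℝ)..1, dtg (s, t)) = 0 := by
    intro s
    have := intervalIntegral.integral_eq_sub_of_hasDerivAt
      (f := fun t => g (s, t)) (f' := fun t => dtg (s, t))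
      (fun t _ => hg_t s t)
      ((hdtg_c.comp (cst s)).intervalIntegrable 0 1)
    rw [this]
    show g (s, 1) - g (s, 0) = 0
    rw [hgper s, sub_self]
  -- value of ∫ Phi
  have hPhi_eq : ∀ s : ℝ, (∫ t in (0:ℝ)..1, Phi (s, t))
      = (∫ t in (0:ℝ)..1, ‖w (s, t)‖ ^ 2) + ∫ t in (0:ℝ)..1, Hs (s, t) := by
    intro s
    have i1 : IntervalIntegrable (fun t => dtg (s, t)) MeasureTheory.volume 0 1 :=
      (hdtg_c.comp (cst s)).intervalIntegrable 0 1
    have i2 : IntervalIntegrable (fun t => ‖w (s, t)‖ ^ 2 + Hs (s, t)) MeasureTheory.volume 0 1 :=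
      (((hw_c.norm.pow 2).add hHs_c).comp (cst s)).intervalIntegrable 0 1
    have i3 : IntervalIntegrable (fun t => ‖w (s, t)‖ ^ 2) MeasureTheory.volume 0 1 :=
      ((hw_c.norm.pow 2).comp (cst s)).intervalIntegrable 0 1
    have i4 : IntervalIntegrable (fun t => Hs (s, t)) MeasureTheory.volume 0 1 :=
      (hHs_c.comp (cst s)).intervalIntegrable 0 1
    rw [hPhi_def]
    simp only
    rw [intervalIntegral.integral_add i1 i2, hdtg_zero s, zero_add,
      intervalIntegral.integral_add i3 i4]
  -- derivative of the action
  have hAd : ∀ s : ℝ, HasDerivAt (fun s' => actionAH (H s') (fun t => u (s', t)))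
      (-∫ t in (0:ℝ)..1, Phi (s, t)) s := by
    intro s
    have h1 := (key s).neg
    have h2 : (fun s' => -∫ t in (0:ℝ)..1, F (s', t))
        = fun s' => actionAH (H s') (fun t => u (s', t)) := by
      funext s'
      exact (hA s').symm
    rw [← h2]; exact h1
  -- identify the target integrals
  have hHsd' : ∀ s t : ℝ, deriv (fun s' => H s' t (u (s, t))) s = Hs (s, t) :=
    fun s t => (hHsDeriv s t (u (s, t))).deriv
  have conj1 : ∀ s : ℝ,
      deriv (fun s' => actionAH (H s') (fun t => u (s', t))) s =
        (-∫ t in (0:ℝ)..1, ‖deriv (fun s' => u (s', t)) s‖ ^ 2)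
          - ∫ t in (0:ℝ)..1, deriv (fun s' => H s' t (u (s, t))) s := by
    intro s
    rw [(hAd s).deriv, hPhi_eq s]
    have e1 : (∫ t in (0:ℝ)..1, ‖deriv (fun s' => u (s', t)) s‖ ^ 2)
        = ∫ t in (0:ℝ)..1, ‖w (s, t)‖ ^ 2 := by
      congr 1
      funext t
      rw [hderiv_s]
    have e2 : (∫ t in (0:ℝ)..1, deriv (fun s' => H s' t (u (s, t))) s)
        = ∫ t in (0:ℝ)..1, Hs (s, t) := by
      congr 1
      funext t
      rw [hHsd']
    rw [e1, e2]
    ring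
  refine ⟨conj1, fun s => ?_, ?_⟩
  · rw [conj1 s]
    have h1 : 0 ≤ ∫ t in (0:ℝ)..1, ‖deriv (fun s' => u (s', t)) s‖ ^ 2 :=
      intervalIntegral.integral_nonneg (by norm_num) (fun t _ => by positivity)
    have h2 : 0 ≤ ∫ t in (0:ℝ)..1, deriv (fun s' => H s' t (u (s, t))) s :=
      intervalIntegral.integral_nonneg (by norm_num) (fun t _ => hmono s t (u (s, t)))
    linarith
  · apply antitone_of_deriv_nonpos
    · exact fun s => (hAd s).differentiableAt
    · intro s
      rw [conj1 s]
      have h1 : 0 ≤ ∫ t in (0:ℝ)..1, ‖deriv (fun s' => u (s', t)) s‖ ^ 2 :=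
        intervalIntegral.integral_nonneg (by norm_num) (fun t _ => by positivity)
      have h2 : 0 ≤ ∫ t in (0:ℝ)..1, deriv (fun s' => H s' t (u (s, t))) s :=
        intervalIntegral.integral_nonneg (by norm_num) (fun t _ => hmono s t (u (s, t)))
      linarith
end
end
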